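/- Let J : (0,1) → ℝ be measurable with |J(u)| ≤ K[u(1−u)]^{−1/2+δ} for all u ∈ (0,1), for some constants K > 0 and δ ∈ (0, 1/2). Let F_1, …, F_k : ℝ → [0,1] be continuous cumulative distribution functions of Borel probability measures μ_1, …, μ_k on ℝ, let λ_1, …, λ_k ≥ λ_0 > 0 with Σ_j λ_j = 1, and set H = Σ_j λ_j F_j. Then for each j, H(x) ∈ (0,1) for μ_j-almost every x, the function x ↦ |J(H(x))| is μ_j-integrable, and ∫_ℝ |J(H(x))| dμ_j(x) ≤ (K/λ_0) ∫_0^1 [u(1−u)]^{−1/2+δ} du < ∞. -/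

import Mathlib

open MeasureTheory ProbabilityTheory Set Filter Topology
open scoped ENNReal

/-!
The mixture `ν = ∑ λ_i μ_i` has cdf `H`, and `μ_j ≤ λ_j⁻¹ ν`. Since `H` is continuous, the
probability integral transform pushes `ν` forward along `H` to the uniform distribution on
`(0,1)`. Hence `H ∈ (0,1)` `ν`-a.e. and `∫ |J ∘ H| dν = ∫_0^1 |J|`, which is finite by the growth
bound on `J` and the convergence of the Beta integral `B(1/2 + δ, 1/2 + δ)`; dominating `μ_j` by
`λ_j⁻¹ ν` transfers everything to `μ_j`.
-/

theorem integrableOn_mul_one_sub_rpow {p : ℝ} (hp : -1 < p) :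
    IntegrableOn (fun u : ℝ => (u * (1 - u)) ^ p) (Ioo 0 1) := by
  have hbeta := (Complex.betaIntegral_convergent (u := p + 1) (v := p + 1)
    (by simp; linarith) (by simp; linarith)).norm
  rw [intervalIntegrable_iff_integrableOn_Ioc_of_le zero_le_one] at hbeta
  refine (hbeta.mono_set Ioo_subset_Ioc_self).congr_fun (fun u ⟨hu0, hu1⟩ => ?_) measurableSet_Ioo
  have h1u : 0 < 1 - u := sub_pos.2 hu1
  simp only [add_sub_cancel_right, norm_mul]
  rw [← Complex.ofReal_one, ← Complex.ofReal_sub, Complex.norm_cpow_eq_rpow_re_of_pos hu0,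
    Complex.norm_cpow_eq_rpow_re_of_pos h1u, Complex.ofReal_re, Real.mul_rpow hu0.le h1u.le]

namespace MeasureTheory

theorem integral_le_toReal_mul_of_le_smul {α : Type*} [MeasurableSpace α] {μ ν : Measure α}
    {c : ℝ≥0∞} (hc : c ≠ ∞) (hμν : μ ≤ c • ν) {f : α → ℝ} (hf0 : 0 ≤ f)
    (hf : Integrable f ν) :
    ∫ x, f x ∂μ ≤ c.toReal * ∫ x, f x ∂ν := by
  calc ∫ x, f x ∂μ ≤ ∫ x, f x ∂(c • ν) :=
        integral_mono_measure hμν (ae_of_all _ hf0) (hf.smul_measure hc)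
    _ = c.toReal * ∫ x, f x ∂ν := by rw [integral_smul_measure, smul_eq_mul]

variable {α ι : Type*} [MeasurableSpace α] [Fintype ι]

/-- Negative weights are truncated to `0` by `ENNReal.ofReal`. -/
noncomputable def Measure.mixture (w : ι → ℝ) (μ : ι → Measure α) : Measure α :=
  ∑ i, ENNReal.ofReal (w i) • μ i

theorem Measure.isProbabilityMeasure_mixture {w : ι → ℝ} (hw : ∀ i, 0 ≤ w i)
    (hsum : ∑ i, w i = 1) (μ : ι → Measure α) [∀ i, IsProbabilityMeasure (μ i)] :
    IsProbabilityMeasure (Measure.mixture w μ) := by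
  constructor
  simp only [Measure.mixture, Measure.finsetSum_apply, Measure.smul_apply, measure_univ,
    smul_eq_mul, mul_one]
  rw [← ENNReal.ofReal_sum_of_nonneg fun i _ => hw i, hsum, ENNReal.ofReal_one]

theorem Measure.le_inv_smul_mixture (w : ι → ℝ) (μ : ι → Measure α) {j : ι} (hj : 0 < w j) :
    μ j ≤ (ENNReal.ofReal (w j))⁻¹ • Measure.mixture w μ := by
  intro t
  rw [Measure.smul_apply, smul_eq_mul,
    ← ENNReal.mul_le_iff_le_inv (ENNReal.ofReal_pos.2 hj).ne' ENNReal.ofReal_ne_top,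
    Measure.mixture, Measure.finsetSum_apply]
  exact Finset.single_le_sum (f := fun i => (ENNReal.ofReal (w i) • μ i) t)
    (fun _ _ => zero_le) (Finset.mem_univ j)

theorem Integrable.of_mixture {w : ι → ℝ} {μ : ι → Measure α} {j : ι} (hj : 0 < w j)
    {f : α → ℝ} (hf : Integrable f (Measure.mixture w μ)) : Integrable f (μ j) :=
  hf.of_measure_le_smul (ENNReal.inv_ne_top.2 (ENNReal.ofReal_pos.2 hj).ne')
    (Measure.le_inv_smul_mixture w μ hj)

theorem integral_le_inv_mul_integral_mixture {w : ι → ℝ} {μ : ι → Measure α} {j : ι}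
    (hj : 0 < w j) {f : α → ℝ} (hf0 : 0 ≤ f) (hf : Integrable f (Measure.mixture w μ)) :
    ∫ x, f x ∂μ j ≤ (w j)⁻¹ * ∫ x, f x ∂Measure.mixture w μ := by
  simpa [ENNReal.toReal_inv, hj.le] using integral_le_toReal_mul_of_le_smul
    (ENNReal.inv_ne_top.2 (ENNReal.ofReal_pos.2 hj).ne') (Measure.le_inv_smul_mixture w μ hj)
    hf0 hf

end MeasureTheory

namespace ProbabilityTheory

theorem cdf_mixture {ι : Type*} [Fintype ι] {w : ι → ℝ} (hw : ∀ i, 0 ≤ w i)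
    (μ : ι → Measure ℝ) [∀ i, IsProbabilityMeasure (μ i)]
    [IsProbabilityMeasure (Measure.mixture w μ)] (x : ℝ) :
    cdf (Measure.mixture w μ) x = ∑ i, w i * cdf (μ i) x := by
  rw [cdf_eq_real, measureReal_def, Measure.mixture, Measure.finsetSum_apply]
  simp only [Measure.smul_apply, smul_eq_mul]
  rw [ENNReal.toReal_sum fun i _ => ENNReal.mul_ne_top ENNReal.ofReal_ne_top (measure_ne_top _ _)]
  simp only [ENNReal.toReal_mul, ENNReal.toReal_ofReal (hw _), cdf_eq_real, measureReal_def]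

theorem exists_cdf_preimage_Iic_eq_Iic {ν : Measure ℝ} (hc : Continuous (cdf ν)) {t : ℝ}
    (ht : t ∈ range (cdf ν)) (ht1 : t < 1) :
    ∃ a, cdf ν a = t ∧ cdf ν ⁻¹' Iic t = Iic a := by
  obtain ⟨b, hb⟩ :=
    eventually_atTop.1 ((tendsto_cdf_atTop ν).eventually (eventually_gt_nhds ht1))
  have hbdd : BddAbove (cdf ν ⁻¹' {t}) :=
    ⟨b, fun x hx => le_of_not_gt fun hbx => (hb x hbx.le).ne' hx⟩
  have hmax := (isClosed_singleton.preimage hc).csSup_mem ht hbdd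
  refine ⟨_, hmax, Subset.antisymm (fun x hx => ?_) fun x hx => (monotone_cdf ν hx).trans_eq hmax⟩
  by_contra! hlt
  rw [mem_Iic, not_le] at hlt
  have hge : t ≤ cdf ν x := hmax ▸ monotone_cdf ν hlt.le
  exact hlt.not_ge (le_csSup hbdd (le_antisymm hx hge))

variable {ν : Measure ℝ} [IsProbabilityMeasure ν]

theorem measure_cdf_preimage_Iic (hc : Continuous (cdf ν)) (t : ℝ) :
    ν (cdf ν ⁻¹' Iic t) = ENNReal.ofReal (min t 1) := by
  rcases le_or_gt 1 t with ht1 | ht1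
  · rw [min_eq_right ht1, ENNReal.ofReal_one, ← measure_univ (μ := ν)]
    exact congrArg ν (eq_univ_of_forall fun x => (cdf_le_one ν x).trans ht1)
  rw [min_eq_left ht1.le]
  by_cases ht : t ∈ range (cdf ν)
  · obtain ⟨a, hat, hpre⟩ := exists_cdf_preimage_Iic_eq_Iic hc ht ht1
    rw [hpre, ← ofReal_cdf, hat]
  · have ht0 : t ≤ 0 := by
      by_contra! ht0
      obtain ⟨a, ha⟩ := ((tendsto_cdf_atBot ν).eventually (eventually_lt_nhds ht0)).exists
      obtain ⟨b, hb⟩ := ((tendsto_cdf_atTop ν).eventually (eventually_gt_nhds ht1)).exists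
      exact ht (mem_range_of_exists_le_of_exists_ge hc ⟨a, ha.le⟩ ⟨b, hb.le⟩)
    have hempty : cdf ν ⁻¹' Iic t = ∅ := eq_empty_of_forall_notMem fun x hx =>
      ht ⟨x, le_antisymm hx (ht0.trans (cdf_nonneg ν x))⟩
    rw [hempty, measure_empty, ENNReal.ofReal_of_nonpos ht0]

theorem map_cdf_eq_volume_restrict_Ioo (hc : Continuous (cdf ν)) :
    ν.map (cdf ν) = volume.restrict (Ioo 0 1) := by
  refine Measure.ext_of_Iic _ _ fun t => ?_
  rw [Measure.map_apply hc.measurable measurableSet_Iic, measure_cdf_preimage_Iic hc,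
    Measure.restrict_congr_set Ioo_ae_eq_Ioc, Measure.restrict_apply measurableSet_Iic,
    inter_comm, Ioc_inter_Iic, Real.volume_Ioc, sub_zero, min_comm]

theorem ae_cdf_mem_Ioo (hc : Continuous (cdf ν)) : ∀ᵐ x ∂ν, cdf ν x ∈ Ioo 0 1 := by
  rw [← ae_map_iff (p := (· ∈ Ioo (0 : ℝ) 1)) hc.aemeasurable measurableSet_Ioo,
    map_cdf_eq_volume_restrict_Ioo hc]
  exact ae_restrict_mem measurableSet_Ioo

theorem integrable_comp_cdf_iff (hc : Continuous (cdf ν)) {f : ℝ → ℝ}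
    (hf : AEStronglyMeasurable f (volume.restrict (Ioo 0 1))) :
    Integrable (f ∘ cdf ν) ν ↔ IntegrableOn f (Ioo 0 1) := by
  rw [← map_cdf_eq_volume_restrict_Ioo hc] at hf
  rw [← integrable_map_measure hf hc.aemeasurable, map_cdf_eq_volume_restrict_Ioo hc,
    IntegrableOn]

theorem integral_comp_cdf (hc : Continuous (cdf ν)) {f : ℝ → ℝ}
    (hf : AEStronglyMeasurable f (volume.restrict (Ioo 0 1))) :
    ∫ x, f (cdf ν x) ∂ν = ∫ u in Ioo 0 1, f u := by
  rw [← map_cdf_eq_volume_restrict_Ioo hc] at hf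
  rw [← integral_map hc.aemeasurable hf, map_cdf_eq_volume_restrict_Ioo hc]

end ProbabilityTheory

/-- Under the Chernoff–Savage growth condition (A.2) on the score-generating function `J`,
the centering constants `∫ J(H) dF_j` are finite: `H ∈ (0,1)` a.e., `|J ∘ H|` is
integrable, and its integral is bounded by `(K/λ_0) ∫_0^1 [u(1−u)]^{−1/2+δ} du < ∞`. -/
theorem score_function_integrable_along_combined_cdf
    {k : ℕ} (J : ℝ → ℝ) (K δ : ℝ) (hK : 0 < K) (hδ : δ ∈ Set.Ioo (0 : ℝ) (1 / 2))
    (hJmeas : Measurable J)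
    (hJ : ∀ u ∈ Set.Ioo (0 : ℝ) 1, |J u| ≤ K * (u * (1 - u)) ^ (-(1 / 2 : ℝ) + δ))
    (μ : Fin k → Measure ℝ) [∀ j, IsProbabilityMeasure (μ j)]
    (F : Fin k → ℝ → ℝ)
    (hF : ∀ j x, F j x = (μ j (Set.Iic x)).toReal)
    (hFcont : ∀ j, Continuous (F j))
    (lam : Fin k → ℝ) (lam0 : ℝ) (hlam0 : 0 < lam0) (hlam : ∀ j, lam0 ≤ lam j)
    (hsum : ∑ j, lam j = 1)
    (H : ℝ → ℝ) (hH : ∀ x, H x = ∑ j, lam j * F j x) :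
    ∀ j : Fin k,
      (∀ᵐ x ∂(μ j), H x ∈ Set.Ioo (0 : ℝ) 1) ∧
      Integrable (fun x => |J (H x)|) (μ j) ∧
      IntegrableOn (fun u => (u * (1 - u)) ^ (-(1 / 2 : ℝ) + δ)) (Set.Ioo (0 : ℝ) 1) ∧
      ∫ x, |J (H x)| ∂(μ j) ≤
        (K / lam0) * ∫ u in Set.Ioo (0 : ℝ) 1, (u * (1 - u)) ^ (-(1 / 2 : ℝ) + δ) := by
  intro j
  have hlam_pos : ∀ i, 0 < lam i := fun i => hlam0.trans_le (hlam i)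
  have hlamj := hlam_pos j
  have := Measure.isProbabilityMeasure_mixture (fun i => (hlam_pos i).le) hsum μ
  obtain rfl : H = cdf (Measure.mixture lam μ) := funext fun x => by
    simp only [hH, cdf_mixture (fun i => (hlam_pos i).le), hF, cdf_eq_real, measureReal_def]
  have hHcont : Continuous (cdf (Measure.mixture lam μ)) :=
    funext hH ▸ continuous_finsetSum _ fun i _ => continuous_const.mul (hFcont i)
  have hg := integrableOn_mul_one_sub_rpow (p := -(1 / 2) + δ) (by linarith [hδ.1])
  have hJint : IntegrableOn (fun u => |J u|) (Ioo 0 1) :=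
    (hg.const_mul K).mono' hJmeas.abs.aestronglyMeasurable
      (ae_restrict_of_forall_mem measurableSet_Ioo fun u hu => by simpa using hJ u hu)
  have hJHint := (integrable_comp_cdf_iff hHcont hJint.aestronglyMeasurable).2 hJint
  refine ⟨(Measure.absolutelyContinuous_of_le_smul (Measure.le_inv_smul_mixture lam μ hlamj)).ae_le
    (ae_cdf_mem_Ioo hHcont), hJHint.of_mixture hlamj, hg, ?_⟩
  have hg0 : 0 ≤ ∫ u in Ioo (0 : ℝ) 1, (u * (1 - u)) ^ (-(1 / 2 : ℝ) + δ) :=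
    setIntegral_nonneg measurableSet_Ioo fun u hu =>
      Real.rpow_nonneg (mul_nonneg hu.1.le (sub_nonneg.2 hu.2.le)) _
  calc ∫ x, |J (cdf (Measure.mixture lam μ) x)| ∂μ j
      ≤ (lam j)⁻¹ * ∫ u in Ioo (0 : ℝ) 1, |J u| := by
        rw [← integral_comp_cdf hHcont hJint.aestronglyMeasurable]
        exact integral_le_inv_mul_integral_mixture hlamj (fun x => abs_nonneg _) hJHint
    _ ≤ (lam j)⁻¹ * ∫ u in Ioo (0 : ℝ) 1, K * (u * (1 - u)) ^ (-(1 / 2 : ℝ) + δ) := by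
        gcongr (lam j)⁻¹ * ?_
        exact setIntegral_mono_on hJint (hg.const_mul K) measurableSet_Ioo hJ
    _ ≤ K / lam0 * ∫ u in Ioo (0 : ℝ) 1, (u * (1 - u)) ^ (-(1 / 2 : ℝ) + δ) := by
        rw [integral_const_mul, ← mul_assoc, inv_mul_eq_div]
        gcongr
        exact hlam j
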